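/- Let F : L(K)^N → K be a social choice function and ρ^F = ⋀_{<∈L(K)^N} ◇_N(ballot(<) ∧ F(<)) the formula characterising it. Then F is monotonic if and only if the formula ρ^F → MON is valid in all models of SCF over N and K, where MON = ⋀_{<∈L(K)^N} ⋀_{<'∈L(K)^N} ⋀_{x∈K} [ ( ◇_N(ballot(<) ∧ x) ∧ ⋀_{i∈N} ⋀_{y∈K} ( ◇_N(ballot(<) ∧ p^i_{x≥y}) → ◇_N(ballot(<') ∧ p^i_{x≥y}) ) ) → ◇_N(ballot(<') ∧ x) ]. -/
import Mathlib


open scoped Classical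

/-- A linear order relation on `K`: `r x y` means "`x` is ranked at least as high as `y`".
It is reflexive, total-and-antisymmetric, and transitive. -/
def IsLin {K : Type} (r : K → K → Prop) : Prop :=
  (∀ x, r x x) ∧ (∀ x y, x ≠ y → (r x y ↔ ¬ r y x)) ∧ (∀ x y z, r x y → r y z → r x z)

/-- The set `L(K)` of linear orders on `K`. -/
abbrev LinPref (K : Type) : Type := {r : K → K → Prop // IsLin r}

noncomputable instance (K : Type) [Finite K] : Fintype (LinPref K) :=
  Fintype.ofFinite _

noncomputable instance (N K : Type) [Finite N] [Finite K] : Fintype (N → LinPref K) :=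
  Fintype.ofFinite _

inductive Formula (N K : Type) : Type
  | top : Formula N K
  | atom : N → K → K → Formula N K
  | outc : K → Formula N K
  | neg : Formula N K → Formula N K
  | or : Formula N K → Formula N K → Formula N K
  | diam : Finset N → Formula N K → Formula N K
  | pref : N → Formula N K → Formula N K

namespace Formula
variable {N K : Type}

def and (φ ψ : Formula N K) : Formula N K := neg (or (neg φ) (neg ψ))
def imp (φ ψ : Formula N K) : Formula N K := or (neg φ) ψ
def iff (φ ψ : Formula N K) : Formula N K := and (imp φ ψ) (imp ψ φ)
def box (C : Finset N) (φ : Formula N K) : Formula N K := neg (diam C (neg φ))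
def prefbox (i : N) (φ : Formula N K) : Formula N K := neg (pref i (neg φ))

def conj : List (Formula N K) → Formula N K
  | [] => top
  | φ :: l => and φ (conj l)

def disj : List (Formula N K) → Formula N K
  | [] => neg top
  | φ :: l => or φ (disj l)

end Formula

/-- A model of social choice functions over `N` and `K`: an outcome for every state
(tuple of reported linear orders) together with a true preference for every agent. -/
structure SCFModel (N K : Type) where
  out : (N → LinPref K) → K
  tpref : N → LinPref K

/-- Truth of a formula at a state of a model of SCF. -/
def Sat {N K : Type} (M : SCFModel N K) : (N → LinPref K) → Formula N K → Prop
  | _, .top => True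
  | v, .atom i x y => (v i).1 x y
  | v, .outc x => M.out v = x
  | v, .neg φ => ¬ Sat M v φ
  | v, .or φ ψ => Sat M v φ ∨ Sat M v ψ
  | v, .diam C φ => ∃ u, (∀ i ∉ C, u i = v i) ∧ Sat M u φ
  | v, .pref i φ => ∃ u, (M.tpref i).1 (M.out u) (M.out v) ∧ Sat M u φ

/-- Validity in the class of all models of SCF over `N` and `K`. -/
def Valid (N K : Type) (φ : Formula N K) : Prop :=
  ∀ (M : SCFModel N K) (v : N → LinPref K), Sat M v φ

/-- The pairs `(x,y)` such that `y` comes immediately after `x` in the linear order `r`. -/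
noncomputable def adjacentPairs {K : Type} [Fintype K] (r : LinPref K) : Finset (K × K) :=
  Finset.univ.filter (fun p : K × K =>
    r.1 p.1 p.2 ∧ p.1 ≠ p.2 ∧ ¬ ∃ z : K, z ≠ p.1 ∧ z ≠ p.2 ∧ r.1 p.1 z ∧ r.1 z p.2)

/-- `ballot_i(<)`: the conjunction `p^i_{x1≥x2} ∧ … ∧ p^i_{x_{m-1}≥x_m}` along the
permutation `[x_1,…,x_m]` of `K` listing `r` from most to least preferred. -/
noncomputable def ballotAgent {N K : Type} [Fintype K] (i : N) (r : LinPref K) : Formula N K :=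
  Formula.conj ((adjacentPairs r).toList.map fun p => Formula.atom i p.1 p.2)

/-- `ballot(<) = ⋀_{i∈N} ballot_i(<)`. -/
noncomputable def ballot {N K : Type} [Fintype N] [Fintype K] (pr : N → LinPref K) :
    Formula N K :=
  Formula.conj ((Finset.univ : Finset N).toList.map fun i => ballotAgent i (pr i))

/-- `ρ^F = ⋀_{<∈L(K)^N} ◇_N (ballot(<) ∧ F(<))`. -/
noncomputable def rhoF {N K : Type} [Fintype N] [Fintype K]
    (F : (N → LinPref K) → K) : Formula N K :=
  Formula.conj ((Finset.univ : Finset (N → LinPref K)).toList.map fun pr =>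
    Formula.diam Finset.univ (Formula.and (ballot pr) (Formula.outc (F pr))))
/-- `CITSOV = ⋀_{x∈K} ◇_N x`. -/
noncomputable def CITSOV (N K : Type) [Fintype N] [Fintype K] : Formula N K :=
  Formula.conj ((Finset.univ : Finset K).toList.map fun x =>
    Formula.diam Finset.univ (Formula.outc x))

/-- `NODICT = ⋀_{i∈N} ◇_N ( ⋁_{x∈K} ( x ∧ ⋁_{y∈K∖{x}} p^i_{y≥x} ) )`. -/
noncomputable def NODICT (N K : Type) [Fintype N] [Fintype K] : Formula N K :=
  Formula.conj ((Finset.univ : Finset N).toList.map fun i =>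
    Formula.diam Finset.univ (Formula.disj ((Finset.univ : Finset K).toList.map fun x =>
      Formula.and (Formula.outc x)
        (Formula.disj ((Finset.univ.erase x).toList.map fun y => Formula.atom i y x)))))

/-- `BR_i = ⋁_{x∈K} ( x ∧ □_i ⟨pref_i⟩ x )`. -/
noncomputable def BR {N K : Type} [Fintype K] (i : N) : Formula N K :=
  Formula.disj ((Finset.univ : Finset K).toList.map fun x =>
    Formula.and (Formula.outc x) (Formula.box {i} (Formula.pref i (Formula.outc x))))

/-- `DOM = ⋀_{i∈N} □_{N∖{i}} BR_i`. -/
noncomputable def DOM (N K : Type) [Fintype N] [Fintype K] : Formula N K :=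
  Formula.conj ((Finset.univ : Finset N).toList.map fun i =>
    Formula.box (Finset.univ.erase i) (BR i))

/-- `ψ ◁_i φ  =  □_N ⋁_{<∈L(K)^N} ( ballot(<) ∧ (φ → □_N (ψ → ⟨pref_i⟩ ballot(<))) )`. -/
noncomputable def tri {N K : Type} [Fintype N] [Fintype K]
    (i : N) (ψ φ : Formula N K) : Formula N K :=
  Formula.box Finset.univ
    (Formula.disj ((Finset.univ : Finset (N → LinPref K)).toList.map fun pr =>
      Formula.and (ballot pr)
        (Formula.imp φ
          (Formula.box Finset.univ (Formula.imp ψ (Formula.pref i (ballot pr)))))))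

/-- `trueprofile_i(<) = (x_m ◁_i x_{m-1}) ∧ … ∧ (x_2 ◁_i x_1)` for `<_i = [x_1,…,x_m]`. -/
noncomputable def trueprofileAgent {N K : Type} [Fintype N] [Fintype K]
    (i : N) (r : LinPref K) : Formula N K :=
  Formula.conj ((adjacentPairs r).toList.map fun p =>
    tri i (Formula.outc p.2) (Formula.outc p.1))

/-- `trueprofile(<) = ⋀_{i∈N} trueprofile_i(<)`. -/
noncomputable def trueprofile {N K : Type} [Fintype N] [Fintype K]
    (pr : N → LinPref K) : Formula N K :=
  Formula.conj ((Finset.univ : Finset N).toList.map fun i => trueprofileAgent i (pr i))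

/-- `STRPROOF = ⋀_{<∈L(K)^N} [ trueprofile(<) → (ballot(<) → DOM) ]`. -/
noncomputable def STRPROOF (N K : Type) [Fintype N] [Fintype K] : Formula N K :=
  Formula.conj ((Finset.univ : Finset (N → LinPref K)).toList.map fun pr =>
    Formula.imp (trueprofile pr) (Formula.imp (ballot pr) (DOM N K)))

/-- `MON`, the modal formulation of monotonicity. -/
noncomputable def MON (N K : Type) [Fintype N] [Fintype K] : Formula N K :=
  Formula.conj
    ((Finset.univ : Finset ((N → LinPref K) × (N → LinPref K) × K)).toList.map fun t =>
      Formula.imp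
        (Formula.and
          (Formula.diam Finset.univ (Formula.and (ballot t.1) (Formula.outc t.2.2)))
          (Formula.conj ((Finset.univ : Finset (N × K)).toList.map fun q =>
            Formula.imp
              (Formula.diam Finset.univ
                (Formula.and (ballot t.1) (Formula.atom q.1 t.2.2 q.2)))
              (Formula.diam Finset.univ
                (Formula.and (ballot t.2.1) (Formula.atom q.1 t.2.2 q.2))))))
        (Formula.diam Finset.univ (Formula.and (ballot t.2.1) (Formula.outc t.2.2))))

section SCFProps

variable {N K : Type}

/-- Citizen sovereignty: every outcome is feasible. -/
def CitizenSovereignty (F : (N → LinPref K) → K) : Prop :=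
  ∀ x : K, ∃ pr : N → LinPref K, F pr = x

/-- Non-dictatorship: for every player `i` there is a profile `<` such that
`F(<) <_i y` for some `y ≠ F(<)`. -/
def NonDictatorial (F : (N → LinPref K) → K) : Prop :=
  ∀ i : N, ∃ (pr : N → LinPref K) (y : K), y ≠ F pr ∧ (pr i).1 y (F pr)

/-- Monotonicity of a social choice function. -/
def Monotonic (F : (N → LinPref K) → K) : Prop :=
  ∀ (pr pr' : N → LinPref K) (x : K), F pr = x →
    (∀ (i : N) (y : K), (pr i).1 x y → (pr' i).1 x y) → F pr' = x

/-- `a` is a dominant strategy equilibrium of the direct mechanism with outcome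
function `o`, for true preferences `pref`. -/
def DomEquil (o : (N → LinPref K) → K) (pref : N → LinPref K)
    (a : N → LinPref K) : Prop :=
  ∀ (i : N) (u : N → LinPref K),
    (pref i).1 (o (Function.update u i (a i))) (o u)

/-- The direct mechanism `o` truthfully DOM-implements `F`. -/
def TruthfullyDomImplements (o F : (N → LinPref K) → K) : Prop :=
  ∀ pr : N → LinPref K, DomEquil o pr pr ∧ o pr = F pr

/-- `F` is strategy-proof: its direct mechanism `g^F` truthfully DOM-implements `F`. -/
def StrategyProof (F : (N → LinPref K) → K) : Prop :=
  TruthfullyDomImplements F F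

end SCFProps

section Helpers

variable {N K : Type}

lemma sat_conj (M : SCFModel N K) (v : N → LinPref K) (l : List (Formula N K)) :
    Sat M v (Formula.conj l) ↔ ∀ φ ∈ l, Sat M v φ := by
  induction l with
  | nil => simp [Formula.conj, Sat]
  | cons φ l ih => simp [Formula.conj, Formula.and, Sat, ih, not_or]

lemma sat_and (M : SCFModel N K) (v : N → LinPref K) (φ ψ : Formula N K) :
    Sat M v (φ.and ψ) ↔ Sat M v φ ∧ Sat M v ψ := by
  simp [Formula.and, Sat, not_or]

lemma sat_imp (M : SCFModel N K) (v : N → LinPref K) (φ ψ : Formula N K) :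
    Sat M v (φ.imp ψ) ↔ (Sat M v φ → Sat M v ψ) := by
  simp [Formula.imp, Sat]; tauto

/-- The strict interval between `x` and `y` in order `r`. -/
noncomputable def rInterval [Fintype K] (r : K → K → Prop) (x y : K) : Finset K :=
  Finset.univ.filter (fun z => r x z ∧ r z y ∧ z ≠ x ∧ z ≠ y)

lemma lin_le [Fintype K] (r s : LinPref K)
    (h : ∀ p ∈ adjacentPairs r, s.1 p.1 p.2) :
    ∀ x y, r.1 x y → s.1 x y := by
  obtain ⟨hr1, hr2, hr3⟩ := r.2
  obtain ⟨hs1, hs2, hs3⟩ := s.2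
  suffices H : ∀ (n : ℕ) (x y : K), (rInterval r.1 x y).card = n → r.1 x y → s.1 x y by
    intro x y hxy; exact H _ x y rfl hxy
  intro n
  induction n using Nat.strong_induction_on with
  | _ n ih =>
    intro x y hcard hxy
    by_cases hxyeq : x = y
    · subst hxyeq; exact hs1 x
    by_cases hadj : ∃ z, z ≠ x ∧ z ≠ y ∧ r.1 x z ∧ r.1 z y
    · obtain ⟨z, hzx, hzy, hxz, hzy'⟩ := hadj
      have hzmem : z ∈ rInterval r.1 x y := by
        simp [rInterval, hxz, hzy', hzx, hzy]
      have h1 : (rInterval r.1 x z).card < n := by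
        rw [← hcard]
        apply Finset.card_lt_card
        constructor
        · intro w hw
          simp only [rInterval, Finset.mem_filter, Finset.mem_univ, true_and] at hw ⊢
          obtain ⟨hxw, hwz, hwx, hwz'⟩ := hw
          have hwy : r.1 w y := hr3 _ _ _ hwz hzy'
          refine ⟨hxw, hwy, hwx, ?_⟩
          intro hweq; subst hweq
          exact ((hr2 z w hzy).mp hzy') hwz
        · intro hsub
          have := hsub hzmem
          simp [rInterval] at this
      have h2 : (rInterval r.1 z y).card < n := by
        rw [← hcard]
        apply Finset.card_lt_card
        constructor
        · intro w hw
          simp only [rInterval, Finset.mem_filter, Finset.mem_univ, true_and] at hw ⊢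
          obtain ⟨hzw, hwy, hwz, hwy'⟩ := hw
          have hxw : r.1 x w := hr3 _ _ _ hxz hzw
          refine ⟨hxw, hwy, ?_, hwy'⟩
          intro hweq; subst hweq
          exact ((hr2 z w (Ne.symm hwz)).mp hzw) hxz
        · intro hsub
          have := hsub hzmem
          simp [rInterval] at this
      exact hs3 x z y (ih _ h1 x z rfl hxz) (ih _ h2 z y rfl hzy')
    · apply h ⟨x, y⟩
      simp only [adjacentPairs, Finset.mem_filter, Finset.mem_univ, true_and]
      exact ⟨hxy, hxyeq, hadj⟩

lemma lin_eq_of_adjacent [Fintype K] (r s : LinPref K)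
    (h : ∀ p ∈ adjacentPairs r, s.1 p.1 p.2) : s = r := by
  have hle := lin_le r s h
  obtain ⟨hr1, hr2, hr3⟩ := r.2
  obtain ⟨hs1, hs2, hs3⟩ := s.2
  apply Subtype.ext
  funext x y
  apply propext
  constructor
  · intro hs
    by_cases hxy : x = y
    · subst hxy; exact hr1 x
    by_contra hnr
    have hryx : r.1 y x := (hr2 y x (Ne.symm hxy)).mpr hnr
    exact ((hs2 x y hxy).mp hs) (hle _ _ hryx)
  · exact hle x y

lemma sat_ballotAgent [Fintype K] (M : SCFModel N K) (v : N → LinPref K)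
    (i : N) (r : LinPref K) :
    Sat M v (ballotAgent i r) ↔ v i = r := by
  rw [ballotAgent, sat_conj]
  constructor
  · intro h
    apply lin_eq_of_adjacent
    intro p hp
    have := h (Formula.atom i p.1 p.2)
      (List.mem_map.mpr ⟨p, Finset.mem_toList.mpr hp, rfl⟩)
    exact this
  · intro hv φ hφ
    obtain ⟨p, hp, rfl⟩ := List.mem_map.mp hφ
    rw [Finset.mem_toList] at hp
    simp only [adjacentPairs, Finset.mem_filter, Finset.mem_univ, true_and] at hp
    show (v i).1 p.1 p.2
    rw [hv]
    exact hp.1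

lemma sat_ballot [Fintype N] [Fintype K] (M : SCFModel N K) (v pr : N → LinPref K) :
    Sat M v (ballot pr) ↔ v = pr := by
  rw [ballot, sat_conj]
  constructor
  · intro h
    funext i
    rw [← sat_ballotAgent M v i (pr i)]
    exact h _ (List.mem_map.mpr ⟨i, by simp, rfl⟩)
  · intro hv φ hφ
    obtain ⟨i, _, rfl⟩ := List.mem_map.mp hφ
    exact (sat_ballotAgent M v i (pr i)).mpr (congrFun hv i)

lemma sat_diam_ballot [Fintype N] [Fintype K] (M : SCFModel N K)
    (v pr : N → LinPref K) (ψ : Formula N K) :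
    Sat M v (Formula.diam Finset.univ ((ballot pr).and ψ)) ↔ Sat M pr ψ := by
  constructor
  · rintro ⟨u, _, hu⟩
    rw [sat_and] at hu
    rw [← (sat_ballot M u pr).mp hu.1]
    exact hu.2
  · intro h
    exact ⟨pr, by simp, (sat_and _ _ _ _).mpr ⟨(sat_ballot M pr pr).mpr rfl, h⟩⟩

/-- Some linear order on a finite type. -/
noncomputable def someLin (K : Type) [Fintype K] : LinPref K :=
  ⟨fun x y => (Fintype.equivFin K x : ℕ) ≤ Fintype.equivFin K y, by
    refine ⟨fun x => le_refl _, fun x y hxy => ?_, fun x y z => le_trans⟩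
    have hne : (Fintype.equivFin K x : ℕ) ≠ Fintype.equivFin K y := by
      intro h
      exact hxy ((Fintype.equivFin K).injective (Fin.val_injective h))
    omega⟩

end Helpers

/-- `F` is monotonic iff `ρ^F → MON` is valid in all models of SCF. -/
theorem monotonic_iff (N K : Type) [Fintype N] [Nonempty N] [Fintype K]
    (F : (N → LinPref K) → K) :
    Monotonic F ↔ Valid N K ((rhoF F).imp (MON N K)) := by
  constructor
  · intro hmon M v
    rw [sat_imp]
    intro hrho
    have hout : ∀ pr : N → LinPref K, M.out pr = F pr := by
      intro pr
      rw [rhoF, sat_conj] at hrho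
      have := hrho _ (List.mem_map.mpr ⟨pr, by simp, rfl⟩)
      rw [sat_diam_ballot] at this
      exact this
    rw [MON, sat_conj]
    intro φ hφ
    obtain ⟨t, _, rfl⟩ := List.mem_map.mp hφ
    obtain ⟨pr, pr', x⟩ := t
    rw [sat_imp]
    intro hh
    rw [sat_and] at hh
    obtain ⟨h1, h2⟩ := hh
    have hx : M.out pr = x := (sat_diam_ballot M v pr _).mp h1
    have hFpr : F pr = x := by rw [← hout pr]; exact hx
    have hmono_hyp : ∀ (i : N) (y : K), (pr i).1 x y → (pr' i).1 x y := by
      intro i y hxy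
      rw [sat_conj] at h2
      have := h2 _ (List.mem_map.mpr ⟨(i, y), by simp, rfl⟩)
      rw [sat_imp, sat_diam_ballot, sat_diam_ballot] at this
      exact this hxy
    rw [sat_diam_ballot]
    show M.out pr' = x
    rw [hout pr']
    exact hmon pr pr' x hFpr hmono_hyp
  · intro hvalid pr pr' x hF hmono
    set M : SCFModel N K := ⟨F, fun _ => someLin K⟩ with hM
    set v0 : N → LinPref K := fun _ => someLin K with hv0
    have h := hvalid M v0
    rw [sat_imp] at h
    have hrho : Sat M v0 (rhoF F) := by
      rw [rhoF, sat_conj]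
      intro φ hφ
      obtain ⟨q, _, rfl⟩ := List.mem_map.mp hφ
      rw [sat_diam_ballot]
      show M.out q = F q
      rfl
    have hmonf := h hrho
    rw [MON, sat_conj] at hmonf
    have hthis := hmonf _ (List.mem_map.mpr ⟨(pr, pr', x), by simp, rfl⟩)
    rw [sat_imp, sat_and] at hthis
    have hres := hthis ⟨(sat_diam_ballot M v0 pr _).mpr (show M.out pr = x from hF), ?_⟩
    · rw [sat_diam_ballot] at hres
      exact hres
    · rw [sat_conj]
      intro φ hφ
      obtain ⟨q, _, rfl⟩ := List.mem_map.mp hφ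
      obtain ⟨i, y⟩ := q
      rw [sat_imp, sat_diam_ballot, sat_diam_ballot]
      intro hd
      exact hmono i y hd
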